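/- arXiv:1805.02223 — 3 statements merged into one kernel-verified Lean document; each statement's English description precedes it below -/
import Mathlib

section
/- Let M_t ≥ N' ≥ 2 be integers with M_t = M_x · M_y, M_x, M_y ≥ 2. For real parameters (ω_x, ω_y), define the transmit steering vector a(ω_x, ω_y) ∈ ℂ^{M_t}, indexed by pairs (l_y, l_x) with 0 ≤ l_x ≤ M_x − 1, 0 ≤ l_y ≤ M_y − 1, by a(ω_x, ω_y)_{(l_y, l_x)} = e^{i(l_y ω_y + l_x ω_x)}. Fix two parameter pairs (ω_x, ω_y) and (ω_x', ω_y') with (e^{iω_x}, e^{iω_y}) ≠ (e^{iω_x'}, e^{iω_y'}), and set a = a(ω_x, ω_y), a' = a(ω_x', ω_y'). Then for almost every Q ∈ ℂ^{M_t × N'} (with respect to Lebesgue measure on ℂ^{M_t × N'} identified with ℝ^{2 M_t N'}), there exist no nonzero ξ, ξ' ∈ ℂ such that ξ Q^H a = ξ' Q^H a'; equivalently, the matrix Q^H [a, a'] ∈ ℂ^{N' × 2} has rank 2 almost surely. -/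
open scoped BigOperators
open MeasureTheory
open scoped Matrix

private lemma conj_affine_null {d : ℂ} (hd : d ≠ 0) (c : ℂ) :
    volume {z : ℂ | (starRingEnd ℂ) z * d + c = 0} = 0 := by
  refine measure_mono_null (t := {(starRingEnd ℂ) (-c / d)}) ?_ (measure_singleton _)
  intro z hz
  simp only [Set.mem_setOf_eq] at hz
  have h1 : (starRingEnd ℂ) z = -c / d := by
    field_simp
    linear_combination hz
  have h2 := congrArg (starRingEnd ℂ) h1
  simpa using h2

private lemma update_null {ι : Type*} [Fintype ι] [DecidableEq ι] {α : ι → Type*}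
    [∀ i, MeasureSpace (α i)] [∀ i, SigmaFinite (volume : Measure (α i))]
    [∀ i, Nonempty (α i)]
    (i₀ : ι) {S : Set (∀ i, α i)} (hS : MeasurableSet S)
    (h : ∀ g : ∀ i, α i, volume {z : α i₀ | Function.update g i₀ z ∈ S} = 0) :
    volume S = 0 := by
  classical
  let p : ι → Prop := fun i => ¬ i = i₀
  letI : Unique {i // ¬ p i} :=
    ⟨⟨⟨i₀, by simp [p]⟩⟩, fun j => Subtype.ext (by
      have hj := j.2
      simp only [p, not_not] at hj
      simpa using hj)⟩
  let e := MeasurableEquiv.piEquivPiSubtypeProd α p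
  have mp := MeasureTheory.volume_preserving_piEquivPiSubtypeProd α p
  have hvol : volume S = volume (⇑e.symm ⁻¹' S) := by
    rw [(mp.symm e).measure_preimage hS.nullMeasurableSet]
  rw [hvol]
  have hT : MeasurableSet (⇑e.symm ⁻¹' S) := e.symm.measurable hS
  have : (volume : Measure ((∀ i : {i // p i}, α i) × (∀ i : {i // ¬ p i}, α i)))
      = (volume : Measure (∀ i : {i // p i}, α i)).prod volume := rfl
  rw [this, MeasureTheory.Measure.measure_prod_null hT]
  refine Filter.Eventually.of_forall (fun x => ?_)
  set g : ∀ i, α i := e.symm (x, Classical.arbitrary _) with hg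
  have key : Prod.mk x ⁻¹' (⇑e.symm ⁻¹' S)
      = ⇑(MeasurableEquiv.piUnique (fun i : {i // ¬ p i} => α i)) ⁻¹'
        {z : α i₀ | Function.update g i₀ z ∈ S} := by
    ext y
    simp only [Set.mem_preimage, Set.mem_setOf_eq]
    have hxy : e.symm (x, y) = Function.update g i₀
        ((MeasurableEquiv.piUnique (fun i : {i // ¬ p i} => α i)) y) := by
      funext i
      by_cases hi : i = i₀
      · subst hi
        simp only [MeasurableEquiv.piUnique, e, MeasurableEquiv.piEquivPiSubtypeProd,
          MeasurableEquiv.symm, MeasurableEquiv.coe_mk, Equiv.piEquivPiSubtypeProd_symm_apply]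
        rw [Function.update_self, dif_neg (not_not_intro rfl)]
        rfl
      · simp only [e, MeasurableEquiv.piEquivPiSubtypeProd, MeasurableEquiv.symm,
          MeasurableEquiv.coe_mk, Equiv.piEquivPiSubtypeProd_symm_apply, hg]
        rw [Function.update_of_ne hi]
        simp only [MeasurableEquiv.coe_mk, Equiv.piEquivPiSubtypeProd_symm_apply]
        have hpi : p i := hi
        rw [dif_pos hpi, dif_pos hpi]
    rw [hxy]
    exact Iff.rfl
  show volume (Prod.mk x ⁻¹' (⇑e.symm ⁻¹' S)) = (0 : (∀ i : {i // p i}, α i) → ENNReal) x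
  simp only [Pi.zero_apply]
  rw [key]
  have hZ : MeasurableSet {z : α i₀ | Function.update g i₀ z ∈ S} :=
    (measurable_update g) hS
  rw [(MeasureTheory.volume_preserving_piUnique _).measure_preimage hZ.nullMeasurableSet]
  exact h g

/-- auxiliary conjugate-linear coordinate sum -/
noncomputable def wSum {P : Type*} [Fintype P] {N' : ℕ} (c : P → ℂ) (j : Fin N')
    (Q : P → Fin N' → ℂ) : ℂ :=
  ∑ p, (starRingEnd ℂ) (Q p j) * c p

lemma wSum_measurable {P : Type*} [Fintype P] {N' : ℕ} (c : P → ℂ) (j : Fin N') :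
    Measurable (wSum c j) := by
  apply Finset.measurable_sum
  intro p _
  have h1 : Measurable (fun Q : P → Fin N' → ℂ => Q p j) :=
    Measurable.comp (measurable_pi_apply j) (measurable_pi_apply p)
  exact (Complex.continuous_conj.measurable.comp h1).mul_const (c p)

lemma wSum_sub {P : Type*} [Fintype P] {N' : ℕ} (b c : P → ℂ) (j : Fin N')
    (Q : P → Fin N' → ℂ) :
    wSum (fun p => b p - c p) j Q = wSum b j Q - wSum c j Q := by
  simp only [wSum, mul_sub, Finset.sum_sub_distrib]

lemma wSum_update {P : Type*} [Fintype P] [DecidableEq P] {N' : ℕ} (c : P → ℂ) (j : Fin N')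
    (g : P → Fin N' → ℂ) (p₁ : P) (r : Fin N' → ℂ) (z : ℂ) :
    wSum c j (Function.update g p₁ (Function.update r j z))
      = (starRingEnd ℂ) z * c p₁
        + ∑ p ∈ Finset.univ.erase p₁, (starRingEnd ℂ) (g p j) * c p := by
  unfold wSum
  rw [← Finset.add_sum_erase _ _ (Finset.mem_univ p₁)]
  congr 1
  · rw [Function.update_self, Function.update_self]
  · exact Finset.sum_congr rfl fun p hp => by
      rw [Function.update_of_ne (Finset.ne_of_mem_erase hp)]

lemma wSum_update_ne {P : Type*} [Fintype P] [DecidableEq P] {N' : ℕ} (c : P → ℂ)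
    {j j' : Fin N'} (hjj : j ≠ j') (g : P → Fin N' → ℂ) (p₁ : P) (r : Fin N' → ℂ) (z : ℂ) :
    wSum c j (Function.update g p₁ (Function.update r j' z))
      = wSum c j (Function.update g p₁ r) := by
  unfold wSum
  refine Finset.sum_congr rfl fun p _ => ?_
  by_cases hp : p = p₁
  · subst hp
    rw [Function.update_self, Function.update_self, Function.update_of_ne hjj]
  · rw [Function.update_of_ne hp, Function.update_of_ne hp]


set_option maxHeartbeats 1000000 in
/-- Lemma 1 of the paper: for two distinct URA steering vectors `a, a'` and almost
every compression matrix `Q`, there are no nonzero scalars `ξ, ξ'` with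
`ξ Qᴴa = ξ' Qᴴa'`; equivalently `Qᴴ[a, a']` has rank 2 almost surely. -/
theorem steering_vector_compressed_identifiability
    (Mx My N' : ℕ) (hMx : 2 ≤ Mx) (hMy : 2 ≤ My) (hN' : 2 ≤ N') (hMt : N' ≤ Mx * My)
    (ωx ωy ωx' ωy' : ℝ)
    (hne : (Complex.exp (Complex.I * (ωx : ℂ)), Complex.exp (Complex.I * (ωy : ℂ)))
         ≠ (Complex.exp (Complex.I * (ωx' : ℂ)), Complex.exp (Complex.I * (ωy' : ℂ))))
    (a a' : (Fin My × Fin Mx) → ℂ)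
    (ha : ∀ p : Fin My × Fin Mx,
      a p = Complex.exp (Complex.I * ((((p.1 : ℕ) : ℝ) * ωy + ((p.2 : ℕ) : ℝ) * ωx : ℝ) : ℂ)))
    (ha' : ∀ p : Fin My × Fin Mx,
      a' p = Complex.exp (Complex.I * ((((p.1 : ℕ) : ℝ) * ωy' + ((p.2 : ℕ) : ℝ) * ωx' : ℝ) : ℂ))) :
    ∀ᵐ Q ∂(volume : Measure ((Fin My × Fin Mx) → Fin N' → ℂ)),
      (¬ ∃ ξ ξ' : ℂ, ξ ≠ 0 ∧ ξ' ≠ 0 ∧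
          ξ • ((Matrix.of Q)ᴴ).mulVec a = ξ' • ((Matrix.of Q)ᴴ).mulVec a') ∧
      ((Matrix.of Q)ᴴ *
        Matrix.of (fun (p : Fin My × Fin Mx) (j : Fin 2) => if j = 0 then a p else a' p)).rank
        = 2 := by
  
  classical
  have h0My : 0 < My := by omega
  have h0Mx : 0 < Mx := by omega
  set j0 : Fin N' := ⟨0, by omega⟩ with hj0
  set j1 : Fin N' := ⟨1, by omega⟩ with hj1
  have hj10 : j1 ≠ j0 := by simp [hj0, hj1, Fin.ext_iff]
  set p₀ : Fin My × Fin Mx := (⟨0, h0My⟩, ⟨0, h0Mx⟩) with hp₀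
  have ha₀ : a p₀ = 1 := by
    rw [ha p₀]
    simp [hp₀]
  have ha'₀ : a' p₀ = 1 := by
    rw [ha' p₀]
    simp [hp₀]
  obtain ⟨p₁, hp₁⟩ : ∃ p₁ : Fin My × Fin Mx, a p₁ ≠ a' p₁ := by
    by_cases hx : Complex.exp (Complex.I * (ωx : ℂ)) = Complex.exp (Complex.I * (ωx' : ℂ))
    · have hy : Complex.exp (Complex.I * (ωy : ℂ)) ≠ Complex.exp (Complex.I * (ωy' : ℂ)) := by
        intro hy; exact hne (Prod.ext hx hy)
      refine ⟨(⟨1, by omega⟩, ⟨0, by omega⟩), ?_⟩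
      rw [ha, ha']
      convert hy using 3 <;> push_cast <;> simp
    · refine ⟨(⟨0, by omega⟩, ⟨1, by omega⟩), ?_⟩
      rw [ha, ha']
      convert hx using 3 <;> push_cast <;> simp
  -- the two null sets
  set S1 : Set ((Fin My × Fin Mx) → Fin N' → ℂ) := {Q | wSum (fun p => a p - a' p) j1 Q = 0} with hS1def
  set S0 : Set ((Fin My × Fin Mx) → Fin N' → ℂ) :=
    {Q | (wSum a j0 Q * wSum a' j1 Q - wSum a j1 Q * wSum a' j0 Q = 0)
        ∧ wSum (fun p => a p - a' p) j1 Q ≠ 0} with hS0def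
  have hS1meas : MeasurableSet S1 :=
    (wSum_measurable _ j1) (measurableSet_singleton 0)
  have hS0meas : MeasurableSet S0 := by
    refine MeasurableSet.inter ?_ ?_
    · exact (((wSum_measurable a j0).mul (wSum_measurable a' j1)).sub
        ((wSum_measurable a j1).mul (wSum_measurable a' j0))) (measurableSet_singleton 0)
    · exact ((wSum_measurable _ j1) (measurableSet_singleton 0)).compl
  have hS1null : volume S1 = 0 := by
    refine update_null p₁ hS1meas (fun g => ?_)
    refine update_null j1 ((measurable_update g) hS1meas) (fun r => ?_)
    show volume {z : ℂ | Function.update g p₁ (Function.update r j1 z) ∈ S1} = 0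
    have hset : {z : ℂ | Function.update g p₁ (Function.update r j1 z) ∈ S1}
        = {z : ℂ | (starRingEnd ℂ) z * (a p₁ - a' p₁)
            + ∑ p ∈ Finset.univ.erase p₁, (starRingEnd ℂ) (g p j1) * (a p - a' p) = 0} := by
      ext z
      simp only [hS1def, Set.mem_setOf_eq, wSum_update]
    rw [hset]
    exact conj_affine_null (sub_ne_zero.mpr hp₁) _
  have hS0null : volume S0 = 0 := by
    refine update_null p₀ hS0meas (fun g => ?_)
    refine update_null j0 ((measurable_update g) hS0meas) (fun r => ?_)
    show volume {z : ℂ | Function.update g p₀ (Function.update r j0 z) ∈ S0} = 0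
    set U1 := wSum a j1 (Function.update g p₀ r) with hU1
    set V1 := wSum a' j1 (Function.update g p₀ r) with hV1
    by_cases hE0 : wSum (fun p => a p - a' p) j1 (Function.update g p₀ r) = 0
    · have hempty : {z : ℂ | Function.update g p₀ (Function.update r j0 z) ∈ S0} = ∅ := by
        ext z
        simp only [hS0def, Set.mem_setOf_eq, Set.mem_empty_iff_false, iff_false, not_and, not_not]
        intro _
        rw [wSum_update_ne _ hj10, hE0]
      rw [hempty]
      exact measure_empty
    · have hd : V1 - U1 ≠ 0 := by
        intro h
        apply hE0
        rw [wSum_sub, ← hU1, ← hV1]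
        linear_combination -h
      refine measure_mono_null (t := {z : ℂ | (starRingEnd ℂ) z * (V1 - U1)
          + ((∑ p ∈ Finset.univ.erase p₀, (starRingEnd ℂ) (g p j0) * a p) * V1
            - U1 * (∑ p ∈ Finset.univ.erase p₀, (starRingEnd ℂ) (g p j0) * a' p)) = 0})
        ?_ (conj_affine_null hd _)
      intro z hz
      simp only [hS0def, Set.mem_setOf_eq] at hz
      obtain ⟨hD0, -⟩ := hz
      rw [wSum_update, wSum_update, wSum_update_ne _ hj10, wSum_update_ne _ hj10,
        ha₀, ha'₀, ← hU1, ← hV1] at hD0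
      simp only [Set.mem_setOf_eq]
      linear_combination hD0
  -- a.e. statement
  have hnull : volume (S0 ∪ S1) = 0 := measure_union_null hS0null hS1null
  have hae : ∀ᵐ Q ∂(volume : Measure ((Fin My × Fin Mx) → Fin N' → ℂ)), Q ∉ S0 ∪ S1 := by
    rw [MeasureTheory.ae_iff]
    simpa only [not_not, Set.setOf_mem_eq] using hnull
  filter_upwards [hae] with Q hQ
  have hDQ : wSum a j0 Q * wSum a' j1 Q - wSum a j1 Q * wSum a' j0 Q ≠ 0 := by
    intro h0
    by_cases hEQ : wSum (fun p => a p - a' p) j1 Q = 0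
    · exact hQ (Or.inr hEQ)
    · exact hQ (Or.inl ⟨h0, hEQ⟩)
  have hw : ∀ (c : (Fin My × Fin Mx) → ℂ) (j : Fin N'), ((Matrix.of Q)ᴴ).mulVec c j = wSum c j Q := by
    intro c j
    rfl
  constructor
  · rintro ⟨ξ, ξ', hξ, hξ', heq⟩
    have h0 := congrFun heq j0
    have h1 := congrFun heq j1
    simp only [Pi.smul_apply, smul_eq_mul, hw] at h0 h1
    have hz : ξ * (wSum a j0 Q * wSum a' j1 Q - wSum a j1 Q * wSum a' j0 Q) = 0 := by
      linear_combination (wSum a' j1 Q) * h0 - (wSum a' j0 Q) * h1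
    exact hDQ ((mul_eq_zero.mp hz).resolve_left hξ)
  · set M2 := (Matrix.of Q)ᴴ *
      Matrix.of (fun (p : Fin My × Fin Mx) (j : Fin 2) => if j = 0 then a p else a' p) with hM2def
    have hM2 : ∀ (j : Fin N'), M2 j 0 = wSum a j Q ∧ M2 j 1 = wSum a' j Q := by
      intro j
      constructor
      · simp only [hM2def, Matrix.mul_apply, Matrix.conjTranspose_apply, Matrix.of_apply,
          if_pos rfl, wSum]
        rfl
      · simp only [hM2def, Matrix.mul_apply, Matrix.conjTranspose_apply, Matrix.of_apply, wSum]
        norm_num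
    set SelM : Matrix (Fin 2) (Fin N') ℂ :=
      Matrix.of (fun (i : Fin 2) (j : Fin N') => if j = Fin.castLE hN' i then (1:ℂ) else 0)
      with hSelM
    have hSel : ∀ (i : Fin 2) (k : Fin 2), (SelM * M2) i k = M2 (Fin.castLE hN' i) k := by
      intro i k
      simp [hSelM, Matrix.mul_apply, ite_mul, one_mul, zero_mul, Finset.sum_ite_eq']
    have hc0 : Fin.castLE hN' (0 : Fin 2) = j0 := rfl
    have hc1 : Fin.castLE hN' (1 : Fin 2) = j1 := rfl
    have hdet : (SelM * M2).det
        = wSum a j0 Q * wSum a' j1 Q - wSum a j1 Q * wSum a' j0 Q := by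
      rw [Matrix.det_fin_two, hSel, hSel, hSel, hSel, hc0, hc1,
        (hM2 j0).1, (hM2 j0).2, (hM2 j1).1, (hM2 j1).2]
      ring
    have hUnit : IsUnit (SelM * M2) := by
      rw [Matrix.isUnit_iff_isUnit_det, isUnit_iff_ne_zero, hdet]
      exact hDQ
    have h2 : (SelM * M2).rank = 2 := by
      rw [Matrix.rank_of_isUnit _ hUnit, Fintype.card_fin]
    have hle : (SelM * M2).rank ≤ M2.rank := Matrix.rank_mul_le_right SelM M2
    have hge : 2 ≤ M2.rank := le_trans (le_of_eq h2.symm) hle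
    have hle2 : M2.rank ≤ 2 := by
      simpa using Matrix.rank_le_card_width M2
    omega
end

section
/- Let M_t = M_x · M_y with M_x, M_y ≥ 2 and N' ≥ 2, M_t ≥ N'. Let A_t = [a_1, …, a_K] ∈ ℂ^{M_t × K} and Ã_t = [ã_1, …, ã_K] ∈ ℂ^{M_t × K} be two URA steering matrices, i.e. each column is of the form a(ω_x, ω_y)_{(l_y,l_x)} = e^{i(l_y ω_y + l_x ω_x)} (0 ≤ l_x ≤ M_x−1, 0 ≤ l_y ≤ M_y−1), where the K parameter pairs of A_t are pairwise distinct modulo 2π. Then for almost every Q ∈ ℂ^{M_t × N'} (Lebesgue measure): if there exist nonzero scalars ξ_1, …, ξ_K ∈ ℂ such that Q^H Ã_t diag(ξ_1,…,ξ_K) = Q^H A_t, then Ã_t = A_t and ξ_1 = ⋯ = ξ_K = 1. -/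
open scoped BigOperators Matrix
open MeasureTheory

/-!
Every steering vector has entry `1` at the reference sensor `l_x = l_y = 0`, so the `k`-th columns
`aₖ` of `A_t` and `ãₖ` of `Ã_t` are either equal or linearly independent. Only the first two columns
`q₀, q₁` of `Q` are needed. If `ãₖ ≠ aₖ`, the `2 × 2` matrix `(qⱼᴴ aₖ, qⱼᴴ ãₖ)` is nonsingular for
almost every `Q`: it is the image of `Q` under a surjective real-linear map, and singular `2 × 2`
matrices form a null set (slice by slice, a kernel of a nonzero functional). This contradicts
`ξₖ Qᴴ ãₖ = Qᴴ aₖ`. If `ãₖ = aₖ`, then `q₀ᴴ aₖ ≠ 0` for almost every `Q`, which forces `ξₖ = 1`.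
-/

open Matrix

section HaarNull

variable {E F : Type*} [NormedAddCommGroup E] [NormedSpace ℝ E] [MeasurableSpace E]
  [BorelSpace E] [FiniteDimensional ℝ E] (μ : Measure E) [μ.IsAddHaarMeasure]
  [AddCommGroup F] [Module ℝ F]

theorem LinearMap.ae_apply_ne_zero {f : E →ₗ[ℝ] F} (hf : f ≠ 0) : ∀ᵐ x ∂μ, f x ≠ 0 := by
  rw [ae_iff]
  exact measure_mono_null (fun x hx => LinearMap.mem_ker.2 (not_not.1 hx))
    (Measure.addHaar_submodule μ (LinearMap.ker f) (mt LinearMap.ker_eq_top.1 hf))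

end HaarNull

/-- The vectors `z.1` and `z.2` of `ℂ²` are almost never parallel. -/
theorem ae_mul_ne_mul (μ ν : Measure (ℂ × ℂ)) [μ.IsAddHaarMeasure] [ν.IsAddHaarMeasure] :
    ∀ᵐ z ∂μ.prod ν, z.1.1 * z.2.2 ≠ z.1.2 * z.2.1 := by
  refine (Measure.ae_prod_iff_ae_ae
    (measurableSet_eq_fun (by fun_prop) (by fun_prop)).compl).2 ?_
  filter_upwards [Measure.ae_ne μ 0] with u hu
  set f : ℂ × ℂ →ₗ[ℂ] ℂ := u.1 • LinearMap.snd ℂ ℂ ℂ - u.2 • LinearMap.fst ℂ ℂ ℂ with hf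
  have hf0 : f.restrictScalars ℝ ≠ 0 := by
    intro h
    have h₁ := LinearMap.congr_fun h (1, 0)
    have h₂ := LinearMap.congr_fun h (0, 1)
    simp only [hf, LinearMap.restrictScalars_apply, LinearMap.sub_apply, LinearMap.smul_apply,
      LinearMap.snd_apply, LinearMap.fst_apply, LinearMap.zero_apply, smul_eq_mul] at h₁ h₂
    exact hu (Prod.ext (by simpa using h₂) (by simpa using h₁))
  filter_upwards [LinearMap.ae_apply_ne_zero ν hf0] with v hv
  simpa [hf, sub_eq_zero] using hv

theorem Matrix.mulVec_surjective_of_linearIndependent_row {K m n : Type*} [Field K] [Fintype m]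
    [Fintype n] {M : Matrix m n K} (hM : LinearIndependent K M.row) :
    Function.Surjective M.mulVec := by
  have h : LinearMap.range M.mulVecLin = ⊤ := by
    apply Submodule.eq_top_of_finrank_eq
    rw [Module.finrank_fintype_fun_eq_card, ← hM.rank_matrix]
    rfl
  exact LinearMap.range_eq_top.1 h

theorem linearIndependent_pair_of_apply_eq {K ι : Type*} [Field K] {a b : ι → K} {p₀ : ι}
    (hab : a p₀ = b p₀) (ha : a p₀ ≠ 0) (hne : a ≠ b) : LinearIndependent K ![a, b] := by
  rw [LinearIndependent.pair_iff]
  intro s t hst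
  have ht : t = -s := by
    have h := congr_fun hst p₀
    simp only [Pi.add_apply, Pi.smul_apply, smul_eq_mul, Pi.zero_apply, ← hab, ← add_mul] at h
    linear_combination (mul_eq_zero.1 h).resolve_right ha
  subst ht
  have hs : s • (a - b) = 0 := by rw [smul_sub, ← hst]; module
  simpa using (smul_eq_zero.1 hs).resolve_right (sub_ne_zero.2 hne)

section Compression

variable {ι n : Type*} [Fintype ι]

def compressedEntry (j : n) (b : ι → ℂ) : (ι → n → ℂ) →ₗ[ℝ] ℂ where
  toFun Q := ((of Q)ᴴ *ᵥ b) j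
  map_add' Q R := by simp [mulVec, dotProduct, add_mul, Finset.sum_add_distrib]
  map_smul' r Q := by simp [mulVec, dotProduct, Finset.mul_sum, mul_assoc]

theorem compressedEntry_apply_eq_mul {m : Type*} (j : n) (k : m) (B : Matrix ι m ℂ)
    (Q : ι → n → ℂ) : compressedEntry j (B.col k) Q = ((of Q)ᴴ * B) j k :=
  rfl

theorem compressedEntry_star (j : n) (b : ι → ℂ) (V : n → ι → ℂ) :
    compressedEntry j b (fun p i => star (V i p)) = V j ⬝ᵥ b := by
  simp [compressedEntry, mulVec, dotProduct, conjTranspose_apply]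

theorem compressedEntry_ne_zero (j : n) {b : ι → ℂ} (hb : b ≠ 0) : compressedEntry j b ≠ 0 := by
  intro h
  have := compressedEntry_star j b (fun _ => star b)
  rw [h, LinearMap.zero_apply, eq_comm] at this
  open ComplexOrder in exact hb (dotProduct_star_self_eq_zero.1 this)

theorem surjective_compressedEntry_pair {a b : ι → ℂ} (hab : LinearIndependent ℂ ![a, b])
    {j₀ j₁ : n} (hj : j₀ ≠ j₁) :
    Function.Surjective (((compressedEntry j₀ a).prod (compressedEntry j₁ a)).prod
      ((compressedEntry j₀ b).prod (compressedEntry j₁ b))) := by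
  classical
  rintro ⟨⟨x₀, x₁⟩, y₀, y₁⟩
  have hsurj := mulVec_surjective_of_linearIndependent_row (M := of ![a, b]) hab
  obtain ⟨v₀, hv₀⟩ := hsurj ![x₀, y₀]
  obtain ⟨v₁, hv₁⟩ := hsurj ![x₁, y₁]
  have h₀ : a ⬝ᵥ v₀ = x₀ ∧ b ⬝ᵥ v₀ = y₀ := ⟨congr_fun hv₀ 0, congr_fun hv₀ 1⟩
  have h₁ : a ⬝ᵥ v₁ = x₁ ∧ b ⬝ᵥ v₁ = y₁ := ⟨congr_fun hv₁ 0, congr_fun hv₁ 1⟩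
  let V : n → ι → ℂ := fun i => if i = j₀ then v₀ else v₁
  refine ⟨fun p i => star (V i p), ?_⟩
  simp only [LinearMap.prod_apply, Function.prod, compressedEntry_star]
  rw [show V j₀ = v₀ from if_pos rfl, show V j₁ = v₁ from if_neg hj.symm]
  simp only [dotProduct_comm _ a, dotProduct_comm _ b, h₀, h₁]

variable [Fintype n] (μ : Measure (ι → n → ℂ)) [μ.IsAddHaarMeasure]

theorem ae_compressedEntry_det_ne_zero {a b : ι → ℂ} (hab : LinearIndependent ℂ ![a, b])
    {j₀ j₁ : n} (hj : j₀ ≠ j₁) :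
    ∀ᵐ Q ∂μ, compressedEntry j₀ a Q * compressedEntry j₁ b Q
      ≠ compressedEntry j₁ a Q * compressedEntry j₀ b Q :=
  (ae_comp_linearMap_mem_iff _ μ (Measure.addHaar.prod Measure.addHaar)
    (surjective_compressedEntry_pair hab hj)
    (measurableSet_eq_fun (by fun_prop) (by fun_prop)).compl).2 (ae_mul_ne_mul _ _)

theorem ae_eq_of_compressedEntry_mul_eq {a b : ι → ℂ} {p₀ : ι} (hab : a p₀ = b p₀)
    (ha : a p₀ ≠ 0) {j₀ j₁ : n} (hj : j₀ ≠ j₁) :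
    ∀ᵐ Q ∂μ, ∀ ξ : ℂ, (∀ j, compressedEntry j b Q * ξ = compressedEntry j a Q) →
      b = a ∧ ξ = 1 := by
  by_cases hba : b = a
  · subst hba
    have hb : b ≠ 0 := fun h => ha (by simp [h])
    filter_upwards [LinearMap.ae_apply_ne_zero μ (compressedEntry_ne_zero j₀ hb)] with Q hQ ξ hξ
    exact ⟨rfl, (mul_eq_left₀ hQ).1 (hξ j₀)⟩
  · filter_upwards [ae_compressedEntry_det_ne_zero μ
      (linearIndependent_pair_of_apply_eq hab ha (Ne.symm hba)) hj] with Q hQ ξ hξ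
    refine absurd ?_ hQ
    rw [← hξ j₀, ← hξ j₁]
    ring

end Compression

-- Instance search gives up on the nested product before reaching the pi instance.
set_option synthInstance.maxSize 1000 in
instance {ι n : Type*} [Fintype ι] [Fintype n] :
    (volume : Measure (ι → n → ℂ)).IsAddHaarMeasure :=
  inferInstance

theorem steering_matrix_compressed_identifiability_general
    (Mx My N' K : ℕ) (hMx : 2 ≤ Mx) (hMy : 2 ≤ My) (hN' : 2 ≤ N')
    (ωx ωy ωx' ωy' : Fin K → ℝ)
    (A A' : Matrix (Fin My × Fin Mx) (Fin K) ℂ)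
    (hA : ∀ (p : Fin My × Fin Mx) (k : Fin K),
      A p k = Complex.exp (Complex.I * ((((p.1 : ℕ) : ℝ) * ωy k + ((p.2 : ℕ) : ℝ) * ωx k : ℝ) : ℂ)))
    (hA' : ∀ (p : Fin My × Fin Mx) (k : Fin K),
      A' p k = Complex.exp (Complex.I * ((((p.1 : ℕ) : ℝ) * ωy' k + ((p.2 : ℕ) : ℝ) * ωx' k : ℝ) : ℂ))) :
    ∀ᵐ Q ∂(volume : Measure ((Fin My × Fin Mx) → Fin N' → ℂ)),
      ∀ ξ : Fin K → ℂ, (∀ k, ξ k ≠ 0) →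
        (Matrix.of Q)ᴴ * A' * Matrix.diagonal ξ = (Matrix.of Q)ᴴ * A →
        A' = A ∧ ∀ k, ξ k = 1 := by
  have : NeZero My := ⟨by omega⟩
  have : NeZero Mx := ⟨by omega⟩
  have hA₀ : ∀ k, A 0 k = 1 := by simp [hA]
  have hA'₀ : ∀ k, A' 0 k = 1 := by simp [hA']
  have hj : (⟨0, by omega⟩ : Fin N') ≠ ⟨1, by omega⟩ := by simp
  have hcols := fun k => ae_eq_of_compressedEntry_mul_eq volume (a := A.col k) (b := A'.col k)
    (p₀ := 0) ((hA₀ k).trans (hA'₀ k).symm) ((hA₀ k).trans_ne one_ne_zero) hj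
  filter_upwards [ae_all_iff.2 hcols] with Q hQ ξ _ heq
  have hentry : ∀ k j, compressedEntry j (A'.col k) Q * ξ k = compressedEntry j (A.col k) Q :=
    fun k j => by simpa [compressedEntry_apply_eq_mul, mul_diagonal] using congr_fun₂ heq j k
  exact ⟨Matrix.ext fun p k => congr_fun (hQ k (ξ k) (hentry k)).1 p,
    fun k => (hQ k (ξ k) (hentry k)).2⟩

/-- Corollary 1 of the paper: a URA steering matrix `A_t` with pairwise distinct
parameter pairs (mod 2π) is uniquely identifiable from the compressed, column-scaled
measurement `Qᴴ Ã_t diag(ξ) = Qᴴ A_t`, for almost every compression matrix `Q`: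
necessarily `Ã_t = A_t` and every `ξ_k = 1`. -/
theorem steering_matrix_compressed_identifiability
    (Mx My N' K : ℕ) (hMx : 2 ≤ Mx) (hMy : 2 ≤ My) (hN' : 2 ≤ N') (hK : 1 ≤ K)
    (hMt : N' ≤ Mx * My)
    (ωx ωy ωx' ωy' : Fin K → ℝ)
    (A A' : Matrix (Fin My × Fin Mx) (Fin K) ℂ)
    (hA : ∀ (p : Fin My × Fin Mx) (k : Fin K),
      A p k = Complex.exp (Complex.I * ((((p.1 : ℕ) : ℝ) * ωy k + ((p.2 : ℕ) : ℝ) * ωx k : ℝ) : ℂ)))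
    (hA' : ∀ (p : Fin My × Fin Mx) (k : Fin K),
      A' p k = Complex.exp (Complex.I * ((((p.1 : ℕ) : ℝ) * ωy' k + ((p.2 : ℕ) : ℝ) * ωx' k : ℝ) : ℂ)))
    (hdist : ∀ k j : Fin K, k ≠ j →
      (Complex.exp (Complex.I * (ωx k : ℂ)), Complex.exp (Complex.I * (ωy k : ℂ)))
      ≠ (Complex.exp (Complex.I * (ωx j : ℂ)), Complex.exp (Complex.I * (ωy j : ℂ)))) :
    ∀ᵐ Q ∂(volume : Measure ((Fin My × Fin Mx) → Fin N' → ℂ)),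
      ∀ ξ : Fin K → ℂ, (∀ k, ξ k ≠ 0) →
        (Matrix.of Q)ᴴ * A' * Matrix.diagonal ξ = (Matrix.of Q)ᴴ * A →
        A' = A ∧ ∀ k, ξ k = 1 :=
  steering_matrix_compressed_identifiability_general Mx My N' K hMx hMy hN' ωx ωy ωx' ωy' A A' hA
    hA'
end

section
/- Let F, I, J, K ≥ 1, let z_1, …, z_F ∈ ℂ, and let A ∈ ℂ^{I × F} be the Vandermonde matrix A_{i,f} = z_f^{i} (i = 0,…,I−1). Let B ∈ ℂ^{J × F}, C ∈ ℂ^{K × F}, and X = (A ⊙ B) C^T ∈ ℂ^{(I·J) × K}. Fix positive integers I_1, I_2 with I_1 + I_2 = I + 1, and let A_1 ∈ ℂ^{I_1 × F} and A_2 ∈ ℂ^{I_2 × F} consist of the first I_1 and first I_2 rows of A, respectively. Define the smoothed matrix X_s ∈ ℂ^{(I_1·J) × (I_2·K)} whose column block indexed by i_2 ∈ {0,…,I_2−1} is (J_{i_2} ⊗ I_J) X, where J_{i_2} = [0_{I_1×i_2}, I_{I_1}, 0_{I_1×(I−i_2−I_1)}] selects rows i_2,…,i_2+I_1−1. Then X_s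 = (A_1 ⊙ B)(A_2 ⊙ C)^T; equivalently, for all 0 ≤ i_1 ≤ I_1−1, 0 ≤ i_2 ≤ I_2−1, j ∈ {1,…,J}, k ∈ {1,…,K}: X_{(i_1+i_2, j), k} = Σ_{f=1}^{F} z_f^{i_1} B_{j,f} · z_f^{i_2} C_{k,f}. -/
open scoped BigOperators Matrix

/-- The spatial-smoothing identity (Eq. (47) of the paper): for
`X = (A ⊙ B) Cᵀ` with `A` Vandermonde and `I₁ + I₂ = I + 1`, the smoothed matrix
whose `(i₂)`-th column block is `(J_{i₂} ⊗ I_J) X` equals `(A₁ ⊙ B)(A₂ ⊙ C)ᵀ`,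
where `A₁`, `A₂` consist of the first `I₁` and first `I₂` rows of `A`. -/
theorem smoothed_unfolding_identity
    (F I J K I₁ I₂ : ℕ) (hF : 1 ≤ F) (hI : 1 ≤ I) (hJ : 1 ≤ J) (hK : 1 ≤ K)
    (hI₁ : 0 < I₁) (hI₂ : 0 < I₂) (hsum : I₁ + I₂ = I + 1)
    (z : Fin F → ℂ)
    (A : Matrix (Fin I) (Fin F) ℂ) (hA : ∀ i f, A i f = z f ^ (i : ℕ))
    (B : Matrix (Fin J) (Fin F) ℂ) (C : Matrix (Fin K) (Fin F) ℂ)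
    (X : Matrix (Fin I × Fin J) (Fin K) ℂ)
    (hX : X = (Matrix.of fun (p : Fin I × Fin J) (f : Fin F) => A p.1 f * B p.2 f) * Cᵀ) :
    -- `X_s = (A₁ ⊙ B)(A₂ ⊙ C)ᵀ`, where the `((i₁,j),(i₂,k))` entry of `X_s` is
    -- `X_{(i₁+i₂, j), k}` (the `i₂`-th column block of `X_s` is `(J_{i₂} ⊗ I_J) X`)
    (Matrix.of fun (p : Fin I₁ × Fin J) (q : Fin I₂ × Fin K) =>
        X (⟨p.1.1 + q.1.1, by have := p.1.isLt; have := q.1.isLt; omega⟩, p.2) q.2)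
    = (Matrix.of fun (p : Fin I₁ × Fin J) (f : Fin F) => z f ^ (p.1 : ℕ) * B p.2 f) *
      (Matrix.of fun (q : Fin I₂ × Fin K) (f : Fin F) => z f ^ (q.1 : ℕ) * C q.2 f)ᵀ := by
  subst hX
  ext p q
  simp only [Matrix.mul_apply, Matrix.of_apply, Matrix.transpose_apply]
  refine Finset.sum_congr rfl fun f _ => ?_
  rw [hA]
  simp [pow_add]
  ring
end
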